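/- Let H be an infinite-dimensional complex Hilbert space and let A = K(H) be the C*-algebra of compact operators on H. Then A is not Jordan weakly amenable; in fact there exists ψ ∈ A* such that the continuous Jordan derivation x ↦ ψx − xψ from A to A* is not an inner Jordan derivation. -/

import Mathlib

/-!
STATEMENT 2: Let `H` be an infinite-dimensional complex Hilbert space and
`A = K(H)` the C*-algebra of compact operators on `H` (realized as the submodule
of compact operators inside `H →L[ℂ] H`).  Then `A` is not Jordan weakly amenable;
in fact there exists `ψ ∈ A*` such that the continuous Jordan derivation
`x ↦ ψx − xψ` (pointwise `x ↦ (y ↦ ψ(x y) − ψ(y x))`) from `A` to `A*` is not an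
inner Jordan derivation.
-/

open scoped ComplexConjugate

noncomputable section

variable (H : Type*) [NormedAddCommGroup H] [InnerProductSpace ℂ H] [CompleteSpace H]

/-- The compact operators on `H`, as a submodule of `H →L[ℂ] H`. -/
abbrev KH : Submodule ℂ (H →L[ℂ] H) := compactOperator (RingHom.id ℂ) H H

variable {H}

lemma KH.mul_mem_left {T : H →L[ℂ] H} (hT : T ∈ KH H) (S : H →L[ℂ] H) :
    S * T ∈ KH H := by
  have h : IsCompactOperator (⇑S ∘ ⇑T) := IsCompactOperator.clm_comp hT S
  exact h

/-- The product of two compact operators, as a compact operator. -/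
def mulK (a b : KH H) : KH H :=
  ⟨(a : H →L[ℂ] H) * (b : H →L[ℂ] H), KH.mul_mem_left b.2 _⟩

/-- The Jordan product `a∘b = (ab+ba)/2` on the compact operators. -/
def jordK (a b : KH H) : KH H :=
  ⟨(2 : ℂ)⁻¹ • ((a : H →L[ℂ] H) * (b : H →L[ℂ] H) + (b : H →L[ℂ] H) * (a : H →L[ℂ] H)),
    Submodule.smul_mem _ _ (Submodule.add_mem _ (KH.mul_mem_left b.2 _)
      (KH.mul_mem_left a.2 _))⟩

/-- `D : K(H) → K(H)*` (continuous linear) is a Jordan derivation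
`D(a∘b) = D(a)∘b + a∘D(b)`, written out pointwise on the dual, where
`(φ∘a)(x) := φ(a∘x)`. -/
def IsJordanDerK (D : (KH H) →L[ℂ] ((KH H) →L[ℂ] ℂ)) : Prop :=
  ∀ a b x : KH H, D (jordK a b) x = D a (jordK b x) + D b (jordK a x)

/-- `D : K(H) → K(H)*` is an inner Jordan derivation: a finite sum of the maps
`a ↦ (x₀∘a)∘b − (b∘a)∘x₀`, i.e. pointwise `a ↦ (y ↦ x₀(a∘(b∘y)) − x₀((b∘a)∘y))`. -/
def IsInnerJordanDerK (D : (KH H) →L[ℂ] ((KH H) →L[ℂ] ℂ)) : Prop :=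
  ∃ (n : ℕ) (x₀ : Fin n → ((KH H) →L[ℂ] ℂ)) (b : Fin n → KH H),
    ∀ a y : KH H, D a y
      = ∑ i, (x₀ i (jordK a (jordK (b i) y)) - x₀ i (jordK (jordK (b i) a) y))


set_option linter.unusedSectionVars false
set_option maxHeartbeats 1000000

local notation "⟪" x ", " y "⟫" => @inner ℂ _ _ x y

/-- rank one operator -/
def rk (f g : H) : H →L[ℂ] H :=
  (ContinuousLinearMap.toSpanSingleton ℂ f).comp (innerSL ℂ g)

@[simp] lemma rk_apply (f g v : H) : rk f g v = ⟪g, v⟫ • f := rfl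

lemma isCompact_rk (f g : H) : IsCompactOperator (rk f g) := by
  have h1 : IsCompactOperator (ContinuousLinearMap.toSpanSingleton ℂ f) := by
    refine ⟨(fun c : ℂ => c • f) '' Metric.closedBall 0 1,
      ((isCompact_closedBall _ _).image (by continuity)), ?_⟩
    exact Filter.mem_of_superset (Metric.closedBall_mem_nhds 0 one_pos)
      (fun c hc => Set.mem_image_of_mem _ hc)
  exact h1.comp_clm (innerSL ℂ g)

lemma rk_mem (f g : H) : rk f g ∈ KH H := isCompact_rk f g

lemma norm_rk_le (f g : H) : ‖rk f g‖ ≤ ‖f‖ * ‖g‖ := by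
  refine ContinuousLinearMap.opNorm_le_bound _ (by positivity) fun v => ?_
  rw [rk_apply, norm_smul]
  calc ‖⟪g, v⟫‖ * ‖f‖ ≤ (‖g‖ * ‖v‖) * ‖f‖ := by
        gcongr; exact norm_inner_le_norm _ _
    _ = ‖f‖ * ‖g‖ * ‖v‖ := by ring

lemma comp_rk (b : H →L[ℂ] H) (f g : H) : b.comp (rk f g) = rk (b f) g := by
  ext v; simp

lemma rk_comp (b : H →L[ℂ] H) (f g : H) :
    (rk f g).comp b = rk f (ContinuousLinearMap.adjoint b g) := by
  ext v; simp [ContinuousLinearMap.adjoint_inner_left]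

@[simp] lemma coe_mulK (a b : KH H) : (mulK a b : H →L[ℂ] H) = ↑a * ↑b := rfl
@[simp] lemma coe_jordK (a b : KH H) :
    (jordK a b : H →L[ℂ] H) = (2 : ℂ)⁻¹ • ((a:H →L[ℂ] H) * b + (b:H →L[ℂ] H) * a) := rfl

/-- commutator in KH -/
def comK (a b : KH H) : KH H := mulK a b - mulK b a

@[simp] lemma coe_comK (a b : KH H) :
    (comK a b : H →L[ℂ] H) = (a:H →L[ℂ] H) * b - (b:H →L[ℂ] H) * a := rfl

lemma jord_identity (a b x : KH H) :
    mulK (jordK a b) x - mulK x (jordK a b) =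
      (mulK a (jordK b x) - mulK (jordK b x) a) + (mulK b (jordK a x) - mulK (jordK a x) b) := by
  apply Subtype.ext
  push_cast [Submodule.coe_sub, Submodule.coe_add, coe_mulK, coe_jordK]
  simp only [smul_mul_assoc, mul_smul_comm, add_mul, mul_add, smul_add, smul_sub, mul_assoc]
  module

lemma inner_jord_identity (a b y : KH H) :
    jordK a (jordK b y) - jordK (jordK b a) y = (4 : ℂ)⁻¹ • comK (comK a y) b := by
  apply Subtype.ext
  push_cast [Submodule.coe_sub, Submodule.coe_smul, coe_jordK, coe_comK, coe_mulK]
  simp only [smul_mul_assoc, mul_smul_comm, add_mul, mul_add, sub_mul, mul_sub, smul_add,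
    smul_sub, mul_assoc, smul_smul]
  norm_num
  module

/-- the vector state -/
def psiV (e : H) : (KH H) →L[ℂ] ℂ :=
  ((innerSL ℂ e).comp (ContinuousLinearMap.apply ℂ H e)).comp (KH H).subtypeL

@[simp] lemma psiV_apply (e : H) (z : KH H) : psiV e z = ⟪e, (z : H →L[ℂ] H) e⟫ := rfl

lemma norm_mulK_le (a b : KH H) : ‖mulK a b‖ ≤ ‖a‖ * ‖b‖ := by
  rw [← Submodule.norm_coe (mulK a b), coe_mulK]
  calc ‖(a : H →L[ℂ] H) * b‖ ≤ ‖(a : H →L[ℂ] H)‖ * ‖(b : H →L[ℂ] H)‖ := norm_mul_le _ _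
    _ = ‖a‖ * ‖b‖ := by rw [Submodule.norm_coe, Submodule.norm_coe]

/-- The Jordan derivation associated to ψ. -/
def Dpsi (ψ : (KH H) →L[ℂ] ℂ) : (KH H) →L[ℂ] ((KH H) →L[ℂ] ℂ) :=
  LinearMap.mkContinuous₂
    (LinearMap.mk₂ ℂ (fun x y => ψ (mulK x y) - ψ (mulK y x))
      (by intro a b c; have : ∀ y : KH H, mulK (a+b) y = mulK a y + mulK b y := by
            intro y; apply Subtype.ext; simp [add_mul]
          have h2 : ∀ y : KH H, mulK y (a+b) = mulK y a + mulK y b := by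
            intro y; apply Subtype.ext; simp [mul_add]
          simp [this, h2]; ring)
      (by intro c a b; have : mulK (c • a) b = c • mulK a b := by
            apply Subtype.ext; simp [smul_mul_assoc]
          have h2 : mulK b (c • a) = c • mulK b a := by
            apply Subtype.ext; simp [mul_smul_comm]
          simp [this, h2]; ring)
      (by intro a b c; have : ∀ y : KH H, mulK y (b+c) = mulK y b + mulK y c := by
            intro y; apply Subtype.ext; simp [mul_add]
          have h2 : ∀ y : KH H, mulK (b+c) y = mulK b y + mulK c y := by
            intro y; apply Subtype.ext; simp [add_mul]
          simp [this, h2]; ring)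
      (by intro c a b; have : mulK a (c • b) = c • mulK a b := by
            apply Subtype.ext; simp [mul_smul_comm]
          have h2 : mulK (c • b) a = c • mulK b a := by
            apply Subtype.ext; simp [smul_mul_assoc]
          simp [this, h2]; ring))
    (2 * ‖ψ‖)
    (by intro x y
        simp only [LinearMap.mk₂_apply]
        calc ‖ψ (mulK x y) - ψ (mulK y x)‖ ≤ ‖ψ (mulK x y)‖ + ‖ψ (mulK y x)‖ := norm_sub_le _ _
          _ ≤ ‖ψ‖ * ‖mulK x y‖ + ‖ψ‖ * ‖mulK y x‖ := by
              gcongr <;> exact ContinuousLinearMap.le_opNorm _ _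
          _ ≤ ‖ψ‖ * (‖x‖ * ‖y‖) + ‖ψ‖ * (‖y‖ * ‖x‖) := by
              gcongr <;> [exact norm_mulK_le x y; exact norm_mulK_le y x]
          _ = 2 * ‖ψ‖ * ‖x‖ * ‖y‖ := by ring)

@[simp] lemma Dpsi_apply (ψ : (KH H) →L[ℂ] ℂ) (x y : KH H) :
    Dpsi ψ x y = ψ (mulK x y) - ψ (mulK y x) := rfl

lemma Dpsi_isJordanDer (ψ : (KH H) →L[ℂ] ℂ) :
    ∀ a b x : KH H, Dpsi ψ (jordK a b) x = Dpsi ψ a (jordK b x) + Dpsi ψ b (jordK a x) := by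
  intro a b x
  simp only [Dpsi_apply, ← map_sub ψ, ← map_add ψ]
  exact congrArg ψ (jord_identity a b x)

open Filter Topology

lemma inner_tendsto_zero {h : ℕ → H} (hh : Orthonormal ℂ h) (v : H) :
    Tendsto (fun N => ⟪v, h N⟫) atTop (𝓝 0) := by
  have hsum : Summable fun i => ‖⟪h i, v⟫‖ ^ 2 := hh.inner_products_summable v
  have h0 : Tendsto (fun N => ‖⟪h N, v⟫‖ ^ 2) atTop (𝓝 0) := hsum.tendsto_atTop_zero
  have h1 : Tendsto (fun N => ‖⟪h N, v⟫‖) atTop (𝓝 0) := by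
    have := h0.sqrt
    simpa [Real.sqrt_sq (norm_nonneg _)] using this
  have h2 : Tendsto (fun N => ⟪h N, v⟫) atTop (𝓝 0) := by
    rw [tendsto_zero_iff_norm_tendsto_zero]; exact h1
  have : (fun N => ⟪v, h N⟫) = fun N => (starRingEnd ℂ) ⟪h N, v⟫ := by
    funext N; rw [inner_conj_symm]
  rw [this]
  simpa using h2.star

lemma exists_orthonormal_seq (hH : ¬ FiniteDimensional ℂ H) :
    ∃ h : ℕ → H, Orthonormal ℂ h := by
  obtain ⟨w, b, hb⟩ := exists_hilbertBasis ℂ H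
  have hw : w.Infinite := by
    by_contra hfin
    rw [Set.not_infinite] at hfin
    have hd := b.dense_span
    rw [show (Set.range ⇑b) = w by rw [hb]; exact Subtype.range_coe] at hd
    have hclosed : IsClosed ((Submodule.span ℂ w : Submodule ℂ H) : Set H) :=
      haveI := FiniteDimensional.span_of_finite ℂ hfin
      Submodule.closed_of_finiteDimensional _
    rw [hclosed.submodule_topologicalClosure_eq] at hd
    exact hH (Module.finite_def.mpr (Submodule.fg_def.mpr ⟨w, hfin, hd⟩))
  let f := hw.natEmbedding
  refine ⟨fun n => (f n : H), ?_⟩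
  have horth : Orthonormal ℂ (fun i : w => (i : H)) := by
    rw [← hb]; exact b.orthonormal
  exact horth.comp f f.injective

/-- finite ε-net for the image of the closed unit ball under a compact operator -/
lemma exists_net {f : H →L[ℂ] H} (hf : IsCompactOperator f) {ε : ℝ} (hε : 0 < ε) :
    ∃ t : Finset H, ∀ x : H, ‖x‖ ≤ 1 → ∃ d ∈ t, ‖f x - d‖ ≤ ε := by
  obtain ⟨K, hK, hKf⟩ := hf.image_closedBall_subset_compact (𝕜₁ := ℂ) 2
  have htb : TotallyBounded (f '' Metric.closedBall 0 2) :=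
    (hK.totallyBounded).subset hKf
  rw [Metric.totallyBounded_iff] at htb
  obtain ⟨t, htfin, ht⟩ := htb ε hε
  refine ⟨htfin.toFinset, fun x hx => ?_⟩
  have hmem : f x ∈ f '' Metric.closedBall 0 2 :=
    ⟨x, by simpa [Metric.mem_closedBall, dist_zero_right] using hx.trans one_le_two, rfl⟩
  obtain ⟨d, hd, hdx⟩ := Set.mem_iUnion₂.mp (ht hmem)
  exact ⟨d, htfin.mem_toFinset.mpr hd, by
    rw [Metric.mem_ball] at hdx
    rw [← dist_eq_norm]
    exact hdx.le⟩

/-- for a compact operator S and orthonormal sequence h, ⟪h N, S (h N)⟫ → 0. -/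
lemma inner_compact_tendsto_zero {S : H →L[ℂ] H} (hS : IsCompactOperator S)
    {h : ℕ → H} (hh : Orthonormal ℂ h) :
    Tendsto (fun N => ⟪h N, S (h N)⟫) atTop (𝓝 0) := by
  rw [NormedAddCommGroup.tendsto_atTop]
  intro ε hε
  have hε4 : 0 < ε / 4 := by linarith
  obtain ⟨t, ht⟩ := exists_net hS hε4
  have hev : ∀ᶠ N in atTop, ∀ d ∈ t, ‖⟪h N, (d : H)⟫‖ ≤ ε / 4 := by
    rw [Filter.eventually_all_finset]
    intro d _
    have h2 : Tendsto (fun N => ⟪h N, (d:H)⟫) atTop (𝓝 0) := by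
      have he : (fun N => ⟪h N, (d:H)⟫) = fun N => (starRingEnd ℂ) ⟪(d:H), h N⟫ := by
        funext N; rw [inner_conj_symm]
      rw [he]; simpa using (inner_tendsto_zero hh d).star
    rw [NormedAddCommGroup.tendsto_atTop] at h2
    obtain ⟨N0, hN0⟩ := h2 (ε/4) hε4
    exact Filter.eventually_atTop.mpr ⟨N0, fun N hN => by simpa using (hN0 N hN).le⟩
  rw [Filter.eventually_atTop] at hev
  obtain ⟨N0, hN0⟩ := hev
  refine ⟨N0, fun N hN => ?_⟩
  rw [sub_zero]
  have hx : ‖h N‖ ≤ 1 := le_of_eq (hh.1 N)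
  obtain ⟨d, hd, hdx⟩ := ht (h N) hx
  have hcalc : ‖⟪h N, S (h N)⟫‖ ≤ ε/2 := by
    calc ‖⟪h N, S (h N)⟫‖ = ‖⟪h N, (S (h N) - d)⟫ + ⟪h N, (d:H)⟫‖ := by
          rw [← inner_add_right, sub_add_cancel]
      _ ≤ ‖⟪h N, (S (h N) - d)⟫‖ + ‖⟪h N, (d:H)⟫‖ := norm_add_le _ _
      _ ≤ ‖h N‖ * ‖S (h N) - d‖ + ε/4 := by
          gcongr
          · exact norm_inner_le_norm _ _
          · exact hN0 N hN d hd
      _ ≤ 1 * (ε/4) + ε/4 := by gcongr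
      _ = ε/2 := by ring
  calc ‖⟪h N, S (h N)⟫‖ ≤ ε/2 := hcalc
    _ < ε := by linarith

lemma norm_apply_tendsto_zero {T : H →L[ℂ] H} (hT : IsCompactOperator T)
    {h : ℕ → H} (hh : Orthonormal ℂ h) :
    Tendsto (fun N => ‖T (h N)‖) atTop (𝓝 0) := by
  have hS : IsCompactOperator ((ContinuousLinearMap.adjoint T).comp T) := by
    have := hT.clm_comp (ContinuousLinearMap.adjoint T)
    simpa [← ContinuousLinearMap.coe_comp'] using this
  have key := inner_compact_tendsto_zero hS hh
  have heq : ∀ N, ⟪h N, ((ContinuousLinearMap.adjoint T).comp T) (h N)⟫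
      = ((‖T (h N)‖ : ℂ)) ^ 2 := by
    intro N
    rw [ContinuousLinearMap.comp_apply, ContinuousLinearMap.adjoint_inner_right,
      inner_self_eq_norm_sq_to_K]
    norm_cast
  have h2 : Tendsto (fun N => ‖T (h N)‖ ^ 2) atTop (𝓝 0) := by
    have := key.norm
    simp only [heq] at this
    simpa [norm_pow] using this
  have := h2.sqrt
  simpa [Real.sqrt_sq (norm_nonneg _)] using this

lemma norm_adjoint_apply_tendsto_zero {T : H →L[ℂ] H} (hT : IsCompactOperator T)
    {h : ℕ → H} (hh : Orthonormal ℂ h) :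
    Tendsto (fun N => ‖(ContinuousLinearMap.adjoint T) (h N)‖) atTop (𝓝 0) := by
  have hS : IsCompactOperator (T.comp (ContinuousLinearMap.adjoint T)) := by
    have := hT.comp_clm (ContinuousLinearMap.adjoint T)
    simpa [← ContinuousLinearMap.coe_comp'] using this
  have key := inner_compact_tendsto_zero hS hh
  have heq : ∀ N, ⟪h N, (T.comp (ContinuousLinearMap.adjoint T)) (h N)⟫
      = ((‖(ContinuousLinearMap.adjoint T) (h N)‖ : ℂ)) ^ 2 := by
    intro N
    rw [ContinuousLinearMap.comp_apply,
      show ⟪h N, T ((ContinuousLinearMap.adjoint T) (h N))⟫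
        = ⟪(ContinuousLinearMap.adjoint T) (h N), (ContinuousLinearMap.adjoint T) (h N)⟫ from
        (ContinuousLinearMap.adjoint_inner_left T _ _).symm,
      inner_self_eq_norm_sq_to_K]
    norm_cast
  have h2 : Tendsto (fun N => ‖(ContinuousLinearMap.adjoint T) (h N)‖ ^ 2) atTop (𝓝 0) := by
    have := key.norm
    simp only [heq] at this
    simpa [norm_pow] using this
  have := h2.sqrt
  simpa [Real.sqrt_sq (norm_nonneg _)] using this

section proj
variable {m : ℕ} (g : Fin m → H)

/-- finite-rank "projection" operator -/
def PofK : H →L[ℂ] H := ∑ k, rk (g k) (g k)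

lemma PofK_apply (x : H) : PofK g x = ∑ k, ⟪g k, x⟫ • g k := by
  simp [PofK, ContinuousLinearMap.sum_apply]

lemma PofK_mem : PofK g ∈ KH H := Submodule.sum_mem _ fun k _ => rk_mem _ _

lemma PofK_symm (hg : Orthonormal ℂ g) (u v : H) : ⟪PofK g u, v⟫ = ⟪u, PofK g v⟫ := by
  simp only [PofK_apply, inner_sum, sum_inner, inner_smul_left, inner_smul_right]
  congr 1; funext k
  rw [inner_conj_symm]; ring

lemma PofK_inner_self (hg : Orthonormal ℂ g) (x : H) :
    ⟪PofK g x, PofK g x⟫ = ⟪PofK g x, x⟫ := by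
  simp only [PofK_apply, inner_sum, sum_inner, inner_smul_left, inner_smul_right,
    orthonormal_iff_ite.mp hg, mul_ite, mul_one, mul_zero, Finset.sum_ite_eq',
    Finset.mem_univ, if_true]
  exact Finset.sum_congr rfl fun k _ => mul_comm _ _

end proj

section proj2
variable {m : ℕ} {g : Fin m → H}

lemma PofK_contraction (hg : Orthonormal ℂ g) (x : H) : ‖x - PofK g x‖ ≤ ‖x‖ := by
  have horth : ⟪PofK g x, x - PofK g x⟫ = 0 := by
    rw [inner_sub_right, PofK_inner_self g hg, sub_self]
  have hpyth : ‖PofK g x + (x - PofK g x)‖ ^ 2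
      = ‖PofK g x‖ ^ 2 + ‖x - PofK g x‖ ^ 2 := by
    rw [norm_add_sq (𝕜 := ℂ)]
    rw [horth]
    simp
  rw [add_sub_cancel] at hpyth
  nlinarith [norm_nonneg (PofK g x), norm_nonneg (x - PofK g x), norm_nonneg x]

lemma PofK_inner_orth (hg : Orthonormal ℂ g) (d x : H) (hd : PofK g d = d) :
    ⟪d, x - PofK g x⟫ = 0 := by
  rw [inner_sub_right, ← hd, PofK_symm g hg, hd, sub_self]

/-- Every finite set of vectors is contained in the range of such a projection;
moreover we can force each listed vector to be fixed. -/
lemma exists_proj (s : Finset H) :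
    ∃ (m : ℕ) (g : Fin m → H), Orthonormal ℂ g ∧ ∀ x ∈ (s : Set H), PofK g x = x := by
  classical
  set V : Submodule ℂ H := Submodule.span ℂ (s : Set H) with hV
  haveI : FiniteDimensional ℂ V := FiniteDimensional.span_of_finite ℂ (s.finite_toSet)
  set b := stdOrthonormalBasis ℂ V
  refine ⟨Module.finrank ℂ V, fun k => ((b k : V) : H), ?_, ?_⟩
  · constructor
    · intro k
      rw [show ‖((b k : V) : H)‖ = ‖(b k : V)‖ from rfl]
      exact b.orthonormal.1 k
    · intro k l hkl
      rw [show ⟪((b k : V) : H), ((b l : V) : H)⟫ = ⟪(b k : V), (b l : V)⟫ from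
        (Submodule.coe_inner V _ _).symm]
      exact b.orthonormal.2 hkl
  · intro x hx
    have hxV : x ∈ V := Submodule.subset_span hx
    have hrepr := b.sum_repr' (⟨x, hxV⟩ : V)
    rw [PofK_apply]
    calc ∑ k, ⟪((b k : V) : H), x⟫ • ((b k : V) : H)
        = ((∑ k, ⟪b k, (⟨x, hxV⟩ : V)⟫ • b k : V) : H) := by
          push_cast
          rfl
      _ = x := by rw [hrepr]
end proj2

lemma opNorm_le_of_unit {f : H →L[ℂ] H} {C : ℝ} (hC : 0 ≤ C)
    (h : ∀ x : H, ‖x‖ ≤ 1 → ‖f x‖ ≤ C) : ‖f‖ ≤ C := by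
  refine f.opNorm_le_bound hC fun x => ?_
  rcases eq_or_ne x 0 with rfl | hx
  · simp
  · have hn : (0:ℝ) < ‖x‖ := norm_pos_iff.mpr hx
    have h1 : ‖(‖x‖⁻¹ : ℂ) • x‖ ≤ 1 := by
      rw [norm_smul]
      simp [abs_of_nonneg, hn.le, inv_mul_cancel₀ hn.ne']
    have := h _ h1
    rw [map_smul, norm_smul] at this
    have h2 : ‖f x‖ = ‖x‖ * (‖(‖x‖⁻¹:ℂ)‖ * ‖f x‖) := by
      simp [norm_inv, abs_of_nonneg hn.le]
      field_simp
    calc ‖f x‖ = ‖x‖ * (‖(‖x‖⁻¹:ℂ)‖ * ‖f x‖) := h2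
      _ ≤ ‖x‖ * C := by gcongr
      _ = C * ‖x‖ := mul_comm _ _

lemma rk_mul_rk (f g f' g' : H) : (rk f g) * (rk f' g') = ⟪g, f'⟫ • rk f g' := by
  ext v
  simp [smul_smul, mul_comm]

def aK (f g : H) : KH H := ⟨rk f g, rk_mem f g⟩
@[simp] lemma coe_aK (f g : H) : (aK f g : H →L[ℂ] H) = rk f g := rfl

def comKl (w : KH H) : (KH H) →ₗ[ℂ] (KH H) where
  toFun z := comK z w
  map_add' z z' := by
    apply Subtype.ext
    push_cast [coe_comK, Submodule.coe_add]
    noncomm_ring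
  map_smul' c z := by
    apply Subtype.ext
    push_cast [coe_comK, Submodule.coe_smul]
    simp [smul_mul_assoc, mul_smul_comm, smul_sub]

@[simp] lemma comKl_apply (w z : KH H) : comKl w z = comK z w := rfl

lemma norm_comK_le (z w : KH H) : ‖comK z w‖ ≤ 2 * ‖z‖ * ‖w‖ := by
  rw [← Submodule.norm_coe, coe_comK]
  calc ‖(z : H →L[ℂ] H) * w - (w : H →L[ℂ] H) * z‖
      ≤ ‖(z : H →L[ℂ] H) * w‖ + ‖(w : H →L[ℂ] H) * z‖ := norm_sub_le _ _
    _ ≤ ‖(z : H →L[ℂ] H)‖ * ‖(w : H →L[ℂ] H)‖ + ‖(w : H →L[ℂ] H)‖ * ‖(z : H →L[ℂ] H)‖ := by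
        gcongr <;> exact norm_mul_le _ _
    _ = 2 * ‖(z : H →L[ℂ] H)‖ * ‖(w : H →L[ℂ] H)‖ := by ring
    _ = 2 * ‖z‖ * ‖w‖ := by rw [Submodule.norm_coe, Submodule.norm_coe]

lemma rk_mul (f g : H) (w : H →L[ℂ] H) :
    rk f g * w = rk f (ContinuousLinearMap.adjoint w g) := rk_comp w f g

lemma mul_rk (f g : H) (w : H →L[ℂ] H) : w * rk f g = rk (w f) g := comp_rk w f g

lemma isCompact_adjoint_comp {T : H →L[ℂ] H} (hT : IsCompactOperator T) :
    IsCompactOperator ((ContinuousLinearMap.adjoint T).comp T) := by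
  have := hT.clm_comp (ContinuousLinearMap.adjoint T)
  simpa [← ContinuousLinearMap.coe_comp'] using this

set_option maxHeartbeats 2000000 in
lemma not_inner_main {h : ℕ → H} (hh : Orthonormal ℂ h)
    (n : ℕ) (x₀ : Fin n → ((KH H) →L[ℂ] ℂ)) (b : Fin n → KH H)
    (hinner : ∀ a y : KH H, Dpsi (psiV (h 0)) a y
      = ∑ i, (x₀ i (jordK a (jordK (b i) y)) - x₀ i (jordK (jordK (b i) a) y))) :
    False := by
  classical
  have he₀norm : ‖h 0‖ = 1 := hh.1 0
  let e₀ : H := h 0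
  let ψ : (KH H) →L[ℂ] ℂ := psiV e₀
  let Φ : (KH H) →ₗ[ℂ] ℂ :=
    ∑ i, ((4:ℂ)⁻¹ • (((x₀ i) : (KH H) →ₗ[ℂ] ℂ).comp (comKl (b i))))
  have hΦ_apply : ∀ z : KH H, Φ z = ∑ i, (4:ℂ)⁻¹ * x₀ i (comK z (b i)) := by
    intro z
    simp [Φ, LinearMap.sum_apply, smul_eq_mul]
  -- the key identity coming from innerness
  have hkey : ∀ a y : KH H, ψ (comK a y) = Φ (comK a y) := by
    intro a y
    have h1 := hinner a y
    rw [Dpsi_apply] at h1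
    have h2 : ψ (mulK a y) - ψ (mulK y a) = ψ (comK a y) := by rw [comK, map_sub]
    rw [h2] at h1
    rw [h1, hΦ_apply]
    refine Finset.sum_congr rfl fun i _ => ?_
    rw [← map_sub (x₀ i), inner_jord_identity, map_smul]
    simp [smul_eq_mul]
  -- evaluation on rank-one projections
  have hmul : ∀ f g : H, ‖g‖ = 1 → mulK (aK f g) (aK g f) = aK f f := by
    intro f g hgn
    apply Subtype.ext
    rw [coe_mulK, coe_aK, coe_aK, coe_aK, rk_mul_rk,
      show ⟪g, g⟫ = (1:ℂ) by rw [inner_self_eq_norm_sq_to_K, hgn]; norm_num, one_smul]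
  have hcomK_rank : ∀ f g : H, ‖f‖ = 1 → ‖g‖ = 1 →
      comK (aK f g) (aK g f) = aK f f - aK g g := by
    intro f g hf hg
    rw [comK, hmul f g hg, hmul g f hf]
  have hψp : ∀ f : H, ψ (aK f f) = ⟪f, e₀⟫ * ⟪e₀, f⟫ := by
    intro f
    show ⟪e₀, rk f f e₀⟫ = _
    rw [rk_apply, inner_smul_right]
  have hI : ∀ f g : H, ‖f‖ = 1 → ‖g‖ = 1 →
      ⟪f, e₀⟫ * ⟪e₀, f⟫ - ⟪g, e₀⟫ * ⟪e₀, g⟫ = Φ (aK f f) - Φ (aK g g) := by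
    intro f g hf hg
    have hk := hkey (aK f g) (aK g f)
    rw [hcomK_rank f g hf hg, map_sub ψ, map_sub Φ, hψp, hψp] at hk
    exact hk
  -- bound for Φ on rank-one projections
  have hbound : ∀ (f : H), ‖f‖ ≤ 1 → ∀ w : KH H,
      ‖comK (aK f f) w‖ ≤ ‖(ContinuousLinearMap.adjoint (w : H →L[ℂ] H)) f‖
        + ‖(w : H →L[ℂ] H) f‖ := by
    intro f hf w
    rw [← Submodule.norm_coe, coe_comK, coe_aK, rk_mul, mul_rk]
    calc ‖rk f (ContinuousLinearMap.adjoint (w : H →L[ℂ] H) f) - rk ((w : H →L[ℂ] H) f) f‖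
        ≤ ‖rk f (ContinuousLinearMap.adjoint (w : H →L[ℂ] H) f)‖
          + ‖rk ((w : H →L[ℂ] H) f) f‖ := norm_sub_le _ _
      _ ≤ ‖f‖ * ‖ContinuousLinearMap.adjoint (w : H →L[ℂ] H) f‖
          + ‖(w : H →L[ℂ] H) f‖ * ‖f‖ := by
          gcongr <;> exact norm_rk_le _ _
      _ ≤ 1 * ‖ContinuousLinearMap.adjoint (w : H →L[ℂ] H) f‖
          + ‖(w : H →L[ℂ] H) f‖ * 1 := by gcongr
      _ = _ := by ring
  -- decay of Φ along the orthonormal sequence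
  have hΦnorm : ∀ z : KH H, ‖Φ z‖ ≤ ∑ i, (1/4) * ‖x₀ i‖ * ‖comK z (b i)‖ := by
    intro z
    rw [hΦ_apply]
    refine (norm_sum_le _ _).trans ?_
    refine Finset.sum_le_sum fun i _ => ?_
    have h2 : ‖(4:ℂ)⁻¹ * x₀ i (comK z (b i))‖ = (1/4) * ‖x₀ i (comK z (b i))‖ := by
      rw [norm_mul]; norm_num
    rw [h2, mul_assoc]
    exact mul_le_mul_of_nonneg_left ((x₀ i).le_opNorm _) (by norm_num)
  have hdecay : Tendsto (fun N => Φ (aK (h N) (h N))) atTop (𝓝 0) := by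
    rw [tendsto_zero_iff_norm_tendsto_zero]
    have hb : ∀ N, ‖Φ (aK (h N) (h N))‖
        ≤ ∑ i, (1/4) * ‖x₀ i‖ * (‖(ContinuousLinearMap.adjoint ((b i : H →L[ℂ] H))) (h N)‖
          + ‖((b i : H →L[ℂ] H)) (h N)‖) := by
      intro N
      refine (hΦnorm _).trans (Finset.sum_le_sum fun i _ => ?_)
      rw [mul_assoc, mul_assoc]
      refine mul_le_mul_of_nonneg_left ?_ (by norm_num)
      exact mul_le_mul_of_nonneg_left (hbound (h N) (le_of_eq (hh.1 N)) (b i)) (norm_nonneg (x₀ i))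
    refine squeeze_zero (fun N => norm_nonneg _) hb ?_
    have : Tendsto (fun N => ∑ i : Fin n, (1/4) * ‖x₀ i‖
        * (‖(ContinuousLinearMap.adjoint ((b i : H →L[ℂ] H))) (h N)‖
          + ‖((b i : H →L[ℂ] H)) (h N)‖)) atTop (𝓝 (∑ i : Fin n, (1/4) * ‖x₀ i‖ * (0 + 0))) := by
      refine tendsto_finset_sum _ fun i _ => ?_
      exact (((norm_adjoint_apply_tendsto_zero (b i).2 hh).add
        (norm_apply_tendsto_zero (b i).2 hh)).const_mul _)
    simpa using this
  have hinner0 : Tendsto (fun N => ⟪h N, e₀⟫ * ⟪e₀, h N⟫) atTop (𝓝 0) := by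
    have h1 : Tendsto (fun N => ⟪e₀, h N⟫) atTop (𝓝 0) := inner_tendsto_zero hh e₀
    have h2 : Tendsto (fun N => ⟪h N, e₀⟫) atTop (𝓝 0) := by
      have he : (fun N => ⟪h N, e₀⟫) = fun N => (starRingEnd ℂ) ⟪e₀, h N⟫ := by
        funext N; rw [inner_conj_symm]
      rw [he]; simpa using h1.star
    simpa using h2.mul h1
  -- exact value of Φ on rank-one projections
  have hΦp : ∀ f : H, ‖f‖ = 1 → Φ (aK f f) = ⟪f, e₀⟫ * ⟪e₀, f⟫ := by
    intro f hf
    have hconst : ∀ N : ℕ, Φ (aK f f)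
        = ⟪f, e₀⟫ * ⟪e₀, f⟫ - ⟪h N, e₀⟫ * ⟪e₀, h N⟫ + Φ (aK (h N) (h N)) := by
      intro N
      have := hI f (h N) hf (hh.1 N)
      linear_combination -this
    have hlim : Tendsto (fun N => ⟪f, e₀⟫ * ⟪e₀, f⟫ - ⟪h N, e₀⟫ * ⟪e₀, h N⟫
        + Φ (aK (h N) (h N))) atTop (𝓝 (⟪f, e₀⟫ * ⟪e₀, f⟫)) := by
      have := (tendsto_const_nhds (x := ⟪f, e₀⟫ * ⟪e₀, f⟫) (f := atTop)).sub hinner0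
      have := this.add hdecay
      simpa using this
    have hconst' : Tendsto (fun _ : ℕ => Φ (aK f f)) atTop (𝓝 (Φ (aK f f))) :=
      tendsto_const_nhds
    have : (fun _ : ℕ => Φ (aK f f)) = fun N => ⟪f, e₀⟫ * ⟪e₀, f⟫
        - ⟪h N, e₀⟫ * ⟪e₀, h N⟫ + Φ (aK (h N) (h N)) := funext hconst
    rw [this] at hconst'
    exact tendsto_nhds_unique hconst' hlim
  -- now the finite-rank projection argument
  set C : ℝ := ∑ i, ‖x₀ i‖ with hCdef
  have hC0 : 0 ≤ C := Finset.sum_nonneg fun i _ => norm_nonneg (x₀ i)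
  set ε : ℝ := 1 / (C + 1) with hεdef
  have hεpos : 0 < ε := by positivity
  have hnet1 : ∀ i : Fin n, ∃ t : Finset H, ∀ x : H, ‖x‖ ≤ 1 →
      ∃ d ∈ t, ‖(b i : H →L[ℂ] H) x - d‖ ≤ ε := fun i => exists_net (b i).2 hεpos
  choose t ht using hnet1
  have hnet2 : ∀ i : Fin n, ∃ s : Finset H, ∀ x : H, ‖x‖ ≤ 1 →
      ∃ d ∈ s, ‖((ContinuousLinearMap.adjoint ((b i : H →L[ℂ] H))).comp
        ((b i : H →L[ℂ] H))) x - d‖ ≤ ε * ε :=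
    fun i => exists_net (isCompact_adjoint_comp (b i).2) (by positivity)
  choose sn hsn using hnet2
  set S : Finset H := insert e₀ (Finset.univ.biUnion fun i => t i ∪ sn i) with hSdef
  obtain ⟨m, g, hg, hfix⟩ := exists_proj S
  have hPe : PofK g e₀ = e₀ := hfix e₀ (by simp [hSdef])
  have hfixt : ∀ i : Fin n, ∀ d ∈ t i, PofK g d = d := by
    intro i d hd
    refine hfix d ?_
    simp only [hSdef, Finset.coe_insert, Set.mem_insert_iff, Finset.mem_coe, Finset.mem_biUnion]
    exact Or.inr ⟨i, Finset.mem_univ i, Finset.mem_union_left _ hd⟩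
  have hfixs : ∀ i : Fin n, ∀ d ∈ sn i, PofK g d = d := by
    intro i d hd
    refine hfix d ?_
    simp only [hSdef, Finset.coe_insert, Set.mem_insert_iff, Finset.mem_coe, Finset.mem_biUnion]
    exact Or.inr ⟨i, Finset.mem_univ i, Finset.mem_union_right _ hd⟩
  set P : KH H := ⟨PofK g, PofK_mem g⟩ with hPdef
  have hPsum : P = ∑ k, aK (g k) (g k) := by
    apply Subtype.ext
    rw [show ((∑ k, aK (g k) (g k) : KH H) : H →L[ℂ] H) = ∑ k, rk (g k) (g k) by
      push_cast; rfl]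
    rfl
  have hΦP : Φ P = 1 := by
    rw [hPsum, map_sum]
    rw [Finset.sum_congr rfl fun k _ => hΦp (g k) (hg.1 k)]
    have h2 : ∑ k, ⟪g k, e₀⟫ * ⟪e₀, g k⟫ = ⟪e₀, PofK g e₀⟫ := by
      rw [PofK_apply, inner_sum]
      exact Finset.sum_congr rfl fun k _ => (inner_smul_right _ _ _).symm
    rw [h2, hPe, inner_self_eq_norm_sq_to_K, show ‖e₀‖ = 1 from he₀norm]
    norm_num
  -- operator norm bounds
  have hopL : ∀ i : Fin n,
      ‖(PofK g).comp ((b i : H →L[ℂ] H)) - ((b i : H →L[ℂ] H))‖ ≤ ε := by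
    intro i
    refine opNorm_le_of_unit hεpos.le fun x hx => ?_
    rw [ContinuousLinearMap.sub_apply, ContinuousLinearMap.comp_apply]
    obtain ⟨d, hd, hdx⟩ := ht i x hx
    have hPd : PofK g d = d := hfixt i d hd
    have hrw : PofK g ((b i : H →L[ℂ] H) x) - (b i : H →L[ℂ] H) x
        = -(((b i : H →L[ℂ] H) x - d) - PofK g ((b i : H →L[ℂ] H) x - d)) := by
      rw [map_sub, hPd]; abel
    rw [hrw, norm_neg]
    exact (PofK_contraction hg _).trans hdx
  have hopR : ∀ i : Fin n,
      ‖((b i : H →L[ℂ] H)) - ((b i : H →L[ℂ] H)).comp (PofK g)‖ ≤ ε := by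
    intro i
    refine opNorm_le_of_unit hεpos.le fun x hx => ?_
    rw [ContinuousLinearMap.sub_apply, ContinuousLinearMap.comp_apply, ← map_sub]
    have hu1 : ‖x - PofK g x‖ ≤ 1 := (PofK_contraction hg x).trans hx
    obtain ⟨d, hd, hdx⟩ := hsn i (x - PofK g x) hu1
    have hdu : ⟪d, x - PofK g x⟫ = 0 := PofK_inner_orth hg d x (hfixs i d hd)
    have hsq : (‖(b i : H →L[ℂ] H) (x - PofK g x)‖ : ℂ) ^ 2
        = ⟪((ContinuousLinearMap.adjoint ((b i : H →L[ℂ] H))).comp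
            ((b i : H →L[ℂ] H))) (x - PofK g x), x - PofK g x⟫ := by
      rw [ContinuousLinearMap.comp_apply, ContinuousLinearMap.adjoint_inner_left,
        inner_self_eq_norm_sq_to_K]
      norm_cast
    have hval : ‖(b i : H →L[ℂ] H) (x - PofK g x)‖ ^ 2 ≤ ε * ε := by
      have h3 : ‖((‖(b i : H →L[ℂ] H) (x - PofK g x)‖ : ℂ)) ^ 2‖
          = ‖(b i : H →L[ℂ] H) (x - PofK g x)‖ ^ 2 := by
        rw [norm_pow, Complex.norm_real, norm_norm]
      rw [← h3, hsq]
      set c := ((ContinuousLinearMap.adjoint ((b i : H →L[ℂ] H))).comp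
        ((b i : H →L[ℂ] H))) (x - PofK g x)
      calc ‖⟪c, x - PofK g x⟫‖ = ‖⟪c - d, x - PofK g x⟫ + ⟪d, x - PofK g x⟫‖ := by
            rw [← inner_add_left, sub_add_cancel]
        _ = ‖⟪c - d, x - PofK g x⟫‖ := by rw [hdu, add_zero]
        _ ≤ ‖c - d‖ * ‖x - PofK g x‖ := norm_inner_le_norm _ _
        _ ≤ (ε * ε) * 1 := by gcongr
        _ = ε * ε := mul_one _
    nlinarith [norm_nonneg ((b i : H →L[ℂ] H) (x - PofK g x)), hεpos.le]
  have hcomP : ∀ i : Fin n, ‖comK P (b i)‖ ≤ 2 * ε := by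
    intro i
    rw [← Submodule.norm_coe, coe_comK]
    have hPcoe : (P : H →L[ℂ] H) = PofK g := rfl
    have hsplit : (P : H →L[ℂ] H) * (b i : H →L[ℂ] H) - (b i : H →L[ℂ] H) * (P : H →L[ℂ] H)
        = ((PofK g).comp ((b i : H →L[ℂ] H)) - ((b i : H →L[ℂ] H)))
          + (((b i : H →L[ℂ] H)) - ((b i : H →L[ℂ] H)).comp (PofK g)) := by
      rw [hPcoe, ContinuousLinearMap.mul_def, ContinuousLinearMap.mul_def]
      abel
    rw [hsplit]
    calc ‖_ + _‖ ≤ ‖(PofK g).comp ((b i : H →L[ℂ] H)) - ((b i : H →L[ℂ] H))‖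
        + ‖((b i : H →L[ℂ] H)) - ((b i : H →L[ℂ] H)).comp (PofK g)‖ := norm_add_le _ _
      _ ≤ ε + ε := add_le_add (hopL i) (hopR i)
      _ = 2 * ε := by ring
  -- contradiction
  have hfinal : ‖Φ P‖ ≤ (C / 2) * ε := by
    refine (hΦnorm P).trans ?_
    calc ∑ i, (1/4) * ‖x₀ i‖ * ‖comK P (b i)‖
        ≤ ∑ i, (1/4) * ‖x₀ i‖ * (2 * ε) := by
          refine Finset.sum_le_sum fun i _ => ?_
          exact mul_le_mul_of_nonneg_left (hcomP i) (by positivity)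
      _ = (∑ i, ‖x₀ i‖) / 2 * ε := by
          rw [Finset.sum_div, Finset.sum_mul]
          exact Finset.sum_congr rfl fun i _ => by ring
      _ = (C / 2) * ε := by rw [← hCdef]
  rw [hΦP] at hfinal
  rw [norm_one] at hfinal
  rw [hεdef] at hfinal
  have hlt : C / 2 * (1 / (C + 1)) < 1 := by
    rw [div_mul_div_comm, div_lt_one (by positivity)]
    nlinarith
  linarith

/-- `K(H)` is not Jordan weakly amenable for infinite-dimensional `H`: there is
`ψ ∈ K(H)*` such that the continuous Jordan derivation `x ↦ ψx − xψ` is not inner. -/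
theorem compact_operators_not_jordan_weakly_amenable
    (hH : ¬ FiniteDimensional ℂ H) :
    (¬ ∀ D : (KH H) →L[ℂ] ((KH H) →L[ℂ] ℂ), IsJordanDerK D → IsInnerJordanDerK D)
    ∧ ∃ (ψ : (KH H) →L[ℂ] ℂ) (D : (KH H) →L[ℂ] ((KH H) →L[ℂ] ℂ)),
        (∀ x y : KH H, D x y = ψ (mulK x y) - ψ (mulK y x))
        ∧ IsJordanDerK D ∧ ¬ IsInnerJordanDerK D := by
  obtain ⟨h, hh⟩ := exists_orthonormal_seq hH
  have hnotinner : ¬ IsInnerJordanDerK (Dpsi (psiV (h 0))) := by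
    rintro ⟨n, x₀, b, hin⟩
    exact not_inner_main hh n x₀ b hin
  constructor
  · intro hall
    exact hnotinner (hall _ (Dpsi_isJordanDer (psiV (h 0))))
  · exact ⟨psiV (h 0), Dpsi (psiV (h 0)), fun x y => rfl,
      Dpsi_isJordanDer (psiV (h 0)), hnotinner⟩
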